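/- arXiv:0811.4677 — 3 statements merged into one kernel-verified Lean document; each statement's English description precedes it below -/
import Mathlib

section
/- Let P be a probability measure on Θ, let θ_0 ∈ Θ, and let R : Θ × X → [0,∞) be measurable with respect to a probability measure Q on X such that ∫_X R(θ, x) dQ(x) ≤ 1 for all θ. Suppose W ⊂ Θ is measurable with P(W) > 0, and suppose ∫_X R(θ,x)^{-1/2} dQ(x) ≤ e^{(3/2)s} for every θ ∈ W (with s ≥ 0). Then for every c > 0, Q( { x : ∫_Θ R(θ,x) dP(θ) ≤ e^{-s(3+2c)} P(W) } ) ≤ e^{-sc}. -/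
/-!
Jensen's inequality for the convex function `t ↦ t ^ (-1/2)` under `P` conditioned on `W` turns
`∫ R(θ, x) dP(θ) ≤ e^{-s(3+2c)} P(W)` into `∫_W R(θ, x)^{-1/2} dP(θ) ≥ e^{s(3+2c)/2} P(W)`.
By Tonelli and the hypothesis on `W`, this last integral has `Q`-mean at most `e^{(3/2)s} P(W)`,
so Markov's inequality bounds the probability of the event by
`e^{(3/2)s} / e^{s(3+2c)/2} = e^{-sc}`.
-/

open MeasureTheory Real
open scoped ENNReal

theorem rpow_neg_lintegral_le_lintegral_rpow_neg {α : Type*} [MeasurableSpace α]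
    {μ : Measure α} [IsProbabilityMeasure μ] {f : α → ℝ≥0∞} (hf : AEMeasurable f μ)
    {p : ℝ} (hp : 0 < p) :
    (∫⁻ a, f a ∂μ) ^ (-p) ≤ ∫⁻ a, f a ^ (-p) ∂μ := by
  -- If `f = 0` on a non-null set the right side is `∞`; if `f = ∞` on one, the left side is `0`.
  by_cases hzero : μ {a | f a = 0} = 0
  swap
  · refine le_top.trans_eq (lintegral_eq_top_of_measure_eq_top_ne_zero (hf.pow_const _) ?_).symm
    simpa [ENNReal.rpow_eq_top_iff, hp, not_lt_of_gt hp] using hzero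
  by_cases htop : μ {a | f a = ∞} = 0
  swap
  · simp [lintegral_eq_top_of_measure_eq_top_ne_zero hf htop, hp]
  -- Hölder with the conjugate exponents `1 / a`, `1 / b` applied to `f ^ a * f ^ (-a) = 1`
  -- gives `1 ≤ (∫ f) ^ a * (∫ f ^ (-p)) ^ b`; raise it to the power `p + 1`.
  set a := p / (p + 1) with ha
  set b := 1 / (p + 1) with hb
  have hab : a + b = 1 := by rw [ha, hb]; field_simp
  have hone : ∀ᵐ x ∂μ, f x ^ a * f x ^ (-a) = 1 := by
    filter_upwards [measure_eq_zero_iff_ae_notMem.mp hzero,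
      measure_eq_zero_iff_ae_notMem.mp htop] with x hx0 hxtop
    rw [← ENNReal.rpow_add _ _ hx0 hxtop, add_neg_cancel, ENNReal.rpow_zero]
  have holder := ENNReal.lintegral_mul_le_Lp_mul_Lq μ
    (Real.HolderConjugate.inv_inv (by positivity) (by positivity) hab)
    (hf.pow_const a) (hf.pow_const (-a))
  have hpb : -a * b⁻¹ = -p := by rw [ha, hb]; field_simp
  simp only [Pi.mul_apply, lintegral_congr_ae hone, lintegral_one, measure_univ, ← ENNReal.rpow_mul,
    hpb, mul_inv_cancel₀ (by positivity : a ≠ 0), ENNReal.rpow_one] at holder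
  rw [one_div, inv_inv, one_div, inv_inv] at holder
  have key : 1 ≤ (∫⁻ x, f x ∂μ) ^ p * ∫⁻ x, f x ^ (-p) ∂μ := by
    have hp1 : 0 ≤ p + 1 := by positivity
    calc (1 : ℝ≥0∞) = 1 ^ (p + 1) := (ENNReal.one_rpow _).symm
      _ ≤ ((∫⁻ x, f x ∂μ) ^ a * (∫⁻ x, f x ^ (-p) ∂μ) ^ b) ^ (p + 1) :=
        ENNReal.rpow_le_rpow holder hp1
      _ = (∫⁻ x, f x ∂μ) ^ p * ∫⁻ x, f x ^ (-p) ∂μ := by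
        rw [ENNReal.mul_rpow_of_nonneg _ _ hp1, ← ENNReal.rpow_mul, ← ENNReal.rpow_mul, ha, hb]
        field_simp
        rw [ENNReal.rpow_one]
  rw [ENNReal.rpow_neg, ENNReal.inv_le_iff_le_mul (fun _ h ↦ by simp [h] at key)
    (fun _ h ↦ by simp [h] at key)]
  exact key

open ProbabilityTheory in
theorem rpow_neg_mul_measure_le_setLIntegral_rpow_neg {α : Type*} [MeasurableSpace α]
    {μ : Measure α} [IsFiniteMeasure μ] {s : Set α} (hs : μ s ≠ 0) {f : α → ℝ≥0∞}
    (hf : AEMeasurable f (μ.restrict s)) {p : ℝ} (hp : 0 < p) {t : ℝ≥0∞}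
    (ht : ∫⁻ a in s, f a ∂μ ≤ t * μ s) :
    t ^ (-p) * μ s ≤ ∫⁻ a in s, f a ^ (-p) ∂μ := by
  have := cond_isProbabilityMeasure (μ := μ) hs
  have hcond (g : α → ℝ≥0∞) : ∫⁻ a, g a ∂μ[|s] = (μ s)⁻¹ * ∫⁻ a in s, g a ∂μ := by
    rw [ProbabilityTheory.cond, lintegral_smul_measure, smul_eq_mul]
  have jensen := rpow_neg_lintegral_le_lintegral_rpow_neg (μ := μ[|s]) (hf.smul_measure _) hp
  rw [hcond, hcond] at jensen
  have havg : (μ s)⁻¹ * ∫⁻ a in s, f a ∂μ ≤ t :=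
    (ENNReal.inv_mul_le_iff hs (measure_ne_top μ s)).mpr (ht.trans_eq (mul_comm _ _))
  have hanti : t ^ (-p) ≤ ((μ s)⁻¹ * ∫⁻ a in s, f a ∂μ) ^ (-p) := by
    simp only [ENNReal.rpow_neg]
    exact ENNReal.inv_le_inv.mpr (ENNReal.rpow_le_rpow havg hp.le)
  rw [mul_comm]
  exact (ENNReal.mul_le_iff_le_inv hs (measure_ne_top μ s)).mpr (hanti.trans jensen)

theorem lintegral_setLIntegral_le_mul {Θ X : Type*} [MeasurableSpace Θ] [MeasurableSpace X]
    {P : Measure Θ} [SFinite P] {Q : Measure X} [SFinite Q] {F : Θ × X → ℝ≥0∞}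
    (hF : Measurable F) {W : Set Θ} {C : ℝ≥0∞} (hC : ∀ θ ∈ W, ∫⁻ x, F (θ, x) ∂Q ≤ C) :
    ∫⁻ x, ∫⁻ θ in W, F (θ, x) ∂P ∂Q ≤ C * P W := calc
  ∫⁻ x, ∫⁻ θ in W, F (θ, x) ∂P ∂Q = ∫⁻ θ in W, ∫⁻ x, F (θ, x) ∂Q ∂P :=
    (lintegral_lintegral_swap (f := fun θ x ↦ F (θ, x)) hF.aemeasurable).symm
  _ ≤ ∫⁻ _ in W, C ∂P := setLIntegral_mono measurable_const hC
  _ = C * P W := setLIntegral_const W C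

theorem evidence_lower_bound_general
    {Θ X : Type*} [MeasurableSpace Θ] [MeasurableSpace X]
    (P : Measure Θ) [IsProbabilityMeasure P]
    (Q : Measure X) [IsProbabilityMeasure Q]
    (R : Θ × X → ℝ≥0∞) (hR : Measurable R)
    (W : Set Θ) (hWpos : 0 < P W)
    (s : ℝ)
    (hW2 : ∀ θ ∈ W, ∫⁻ x, (R (θ, x)) ^ (-(1 : ℝ) / 2) ∂Q
      ≤ ENNReal.ofReal (Real.exp ((3 / 2) * s)))
    (c : ℝ) :
    Q {x | ∫⁻ θ, R (θ, x) ∂P ≤ ENNReal.ofReal (Real.exp (-(s * (3 + 2 * c)))) * P W}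
      ≤ ENNReal.ofReal (Real.exp (-(s * c))) := by
  set u := s * (3 + 2 * c)
  set Z : X → ℝ≥0∞ := fun x ↦ ∫⁻ θ in W, R (θ, x) ^ (-(1 : ℝ) / 2) ∂P
  set T := ENNReal.ofReal (exp (u / 2)) * P W
  have hT0 : T ≠ 0 := mul_ne_zero (by simpa using exp_pos _) hWpos.ne'
  have hTtop : T ≠ ∞ := ENNReal.mul_ne_top ENNReal.ofReal_ne_top (measure_ne_top P W)
  have hevent : {x | ∫⁻ θ, R (θ, x) ∂P ≤ ENNReal.ofReal (exp (-u)) * P W} ⊆ {x | T ≤ Z x} := by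
    intro x hx
    have h := rpow_neg_mul_measure_le_setLIntegral_rpow_neg hWpos.ne'
      (hR.comp measurable_prodMk_right).aemeasurable (p := 1 / 2) (by norm_num)
      ((setLIntegral_le_lintegral W _).trans hx)
    have hexp : ENNReal.ofReal (exp (-u)) ^ (-(1 / 2 : ℝ)) = ENNReal.ofReal (exp (u / 2)) := by
      rw [ENNReal.ofReal_rpow_of_pos (exp_pos _), ← exp_mul]
      congr 2
      ring
    rwa [hexp, ← neg_div] at h
  calc Q {x | ∫⁻ θ, R (θ, x) ∂P ≤ ENNReal.ofReal (exp (-u)) * P W}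
      ≤ Q {x | T ≤ Z x} := measure_mono hevent
    _ ≤ (∫⁻ x, Z x ∂Q) / T :=
      meas_ge_le_lintegral_div (hR.pow_const _).lintegral_prod_left'.aemeasurable hT0 hTtop
    _ ≤ ENNReal.ofReal (exp ((3 / 2) * s)) * P W / T := by
      gcongr
      exact lintegral_setLIntegral_le_mul (hR.pow_const _) hW2
    _ = ENNReal.ofReal (exp (-(s * c))) := by
      rw [ENNReal.mul_div_mul_right _ _ hWpos.ne' (measure_ne_top P W),
        ← ENNReal.ofReal_div_of_pos (exp_pos _), ← exp_sub]
      congr 2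
      ring

/-- Evidence lower bound (abstract form of Lemma 5.2): if `∫ R(θ,·) dQ ≤ 1` for all `θ`,
`P(W) > 0` and `∫ R(θ,·)^{-1/2} dQ ≤ e^{(3/2)s}` for all `θ ∈ W`, then for every `c > 0`
`Q({x : ∫ R(θ,x) dP(θ) ≤ e^{-s(3+2c)} P(W)}) ≤ e^{-sc}`. -/
theorem evidence_lower_bound
    {Θ X : Type*} [MeasurableSpace Θ] [MeasurableSpace X]
    (P : Measure Θ) [IsProbabilityMeasure P]
    (Q : Measure X) [IsProbabilityMeasure Q]
    (R : Θ × X → ℝ≥0∞) (hR : Measurable R)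
    (hRint : ∀ θ, ∫⁻ x, R (θ, x) ∂Q ≤ 1)
    (W : Set Θ) (hW : MeasurableSet W) (hWpos : 0 < P W)
    (s : ℝ) (hs : 0 ≤ s)
    (hW2 : ∀ θ ∈ W, ∫⁻ x, (R (θ, x)) ^ (-(1 : ℝ) / 2) ∂Q
      ≤ ENNReal.ofReal (Real.exp ((3 / 2) * s)))
    (c : ℝ) (hc : 0 < c) :
    Q {x | ∫⁻ θ, R (θ, x) ∂P ≤ ENNReal.ofReal (Real.exp (-(s * (3 + 2 * c)))) * P W}
      ≤ ENNReal.ofReal (Real.exp (-(s * c))) :=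
  evidence_lower_bound_general P Q R hR W hWpos s hW2 c
end

section
/- Fix 0 < β ≤ 1/2 and 0 < α < 1. Let Q be a probability measure on X, let Π be a finite measure on a set S of parameters, and let R : S × X → [0,∞) be measurable such that ∫_X R(θ,x)^{1/2} dQ(x) ≤ e^{-s/2} for all θ ∈ S and some s ≥ 0. Then ∫_X ( ∫_S R(θ,x)^β dΠ(θ) )^α dQ(x) ≤ e^{-βαs} Π(S)^α. -/
/-!
Hölder's inequality in `θ` interpolates `R^β = (R^{1/2})^{2β}` between `R^{1/2}` and `1`, so
`∫ R^β dΠ ≤ (∫ R^{1/2} dΠ)^{2β} Π(S)^{1-2β}`. Raising to the power `α` and integrating in `x`,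
Jensen's inequality for the concave power `t ↦ t^{2βα}` (here `2βα ≤ 1`) moves the power outside the
`Q`-integral, and Tonelli together with the affinity bound gives `∫∫ R^{1/2} dΠ dQ ≤ e^{-s/2} Π(S)`.
-/

open MeasureTheory Real
open scoped ENNReal

namespace MeasureTheory

variable {Y : Type*} [MeasurableSpace Y]

theorem lintegral_rpow_le_rpow_lintegral_mul_measure_univ (μ : Measure Y) {f : Y → ℝ≥0∞}
    (hf : AEMeasurable f μ) {p : ℝ} (hp0 : 0 ≤ p) (hp1 : p ≤ 1) :
    ∫⁻ a, f a ^ p ∂μ ≤ (∫⁻ a, f a ∂μ) ^ p * μ Set.univ ^ (1 - p) := by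
  simpa using ENNReal.lintegral_mul_norm_pow_le (g := fun _ => 1) hf aemeasurable_const hp0
    (sub_nonneg.2 hp1) (add_sub_cancel p 1)

theorem lintegral_rpow_le_rpow_lintegral (μ : Measure Y) [IsProbabilityMeasure μ]
    {f : Y → ℝ≥0∞} (hf : AEMeasurable f μ) {p : ℝ} (hp0 : 0 ≤ p) (hp1 : p ≤ 1) :
    ∫⁻ a, f a ^ p ∂μ ≤ (∫⁻ a, f a ∂μ) ^ p := by
  simpa using lintegral_rpow_le_rpow_lintegral_mul_measure_univ μ hf hp0 hp1

variable {S X : Type*} [MeasurableSpace S] [MeasurableSpace X]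

theorem lintegral_rpow_lintegral_rpow_le (Q : Measure X) [IsProbabilityMeasure Q]
    (Pi : Measure S) [SFinite Pi] {F : S × X → ℝ≥0∞} (hF : Measurable F)
    {p α : ℝ} (hp0 : 0 ≤ p) (hp1 : p ≤ 1) (hα0 : 0 ≤ α) (hpα : p * α ≤ 1) :
    ∫⁻ x, (∫⁻ θ, F (θ, x) ^ p ∂Pi) ^ α ∂Q
      ≤ (∫⁻ x, ∫⁻ θ, F (θ, x) ∂Pi ∂Q) ^ (p * α) * Pi Set.univ ^ ((1 - p) * α) := by
  set G : X → ℝ≥0∞ := fun x => ∫⁻ θ, F (θ, x) ∂Pi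
  have hG : Measurable G := hF.lintegral_prod_left'
  have holder : ∀ x, ∫⁻ θ, F (θ, x) ^ p ∂Pi ≤ G x ^ p * Pi Set.univ ^ (1 - p) := fun x =>
    lintegral_rpow_le_rpow_lintegral_mul_measure_univ Pi
      (hF.comp measurable_prodMk_right).aemeasurable hp0 hp1
  calc ∫⁻ x, (∫⁻ θ, F (θ, x) ^ p ∂Pi) ^ α ∂Q
      ≤ ∫⁻ x, G x ^ (p * α) * Pi Set.univ ^ ((1 - p) * α) ∂Q := by
        refine lintegral_mono fun x => (ENNReal.rpow_le_rpow (holder x) hα0).trans_eq ?_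
        rw [ENNReal.mul_rpow_of_nonneg _ _ hα0, ← ENNReal.rpow_mul, ← ENNReal.rpow_mul]
    _ = (∫⁻ x, G x ^ (p * α) ∂Q) * Pi Set.univ ^ ((1 - p) * α) :=
        lintegral_mul_const'' _ (hG.pow_const _).aemeasurable
    _ ≤ (∫⁻ x, G x ∂Q) ^ (p * α) * Pi Set.univ ^ ((1 - p) * α) := by
        gcongr
        exact lintegral_rpow_le_rpow_lintegral Q hG.aemeasurable (by positivity) hpα

theorem lintegral_lintegral_le_mul_measure_univ_of_forall_lintegral_le (Q : Measure X) [SFinite Q]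
    (Pi : Measure S) [SFinite Pi] {F : S × X → ℝ≥0∞} (hF : Measurable F) {c : ℝ≥0∞}
    (hc : ∀ θ, ∫⁻ x, F (θ, x) ∂Q ≤ c) :
    ∫⁻ x, ∫⁻ θ, F (θ, x) ∂Pi ∂Q ≤ c * Pi Set.univ := by
  rw [lintegral_lintegral_swap (f := fun x θ => F (θ, x)) (hF.comp measurable_swap).aemeasurable]
  calc ∫⁻ θ, ∫⁻ x, F (θ, x) ∂Q ∂Pi ≤ ∫⁻ _, c ∂Pi := lintegral_mono hc
    _ = c * Pi Set.univ := lintegral_const c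

end MeasureTheory

theorem pseudoposterior_numerator_bound_small_beta_general
    {S X : Type*} [MeasurableSpace S] [MeasurableSpace X]
    (Q : Measure X) [IsProbabilityMeasure Q]
    (Pi : Measure S) [IsFiniteMeasure Pi]
    (R : S × X → ℝ≥0∞) (hR : Measurable R)
    (β : ℝ) (hβ0 : 0 < β) (hβ1 : β ≤ 1 / 2)
    (α : ℝ) (hα0 : 0 < α) (hα1 : α < 1)
    (s : ℝ)
    (hhalf : ∀ θ : S, ∫⁻ x, (R (θ, x)) ^ ((1 : ℝ) / 2) ∂Q
      ≤ ENNReal.ofReal (Real.exp (-s / 2))) :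
    ∫⁻ x, (∫⁻ θ, (R (θ, x)) ^ β ∂Pi) ^ α ∂Q
      ≤ ENNReal.ofReal (Real.exp (-(β * α * s))) * (Pi Set.univ) ^ α := by
  have hsqrt : Measurable fun z => R z ^ ((1 : ℝ) / 2) := hR.pow_const _
  have hpα : 0 ≤ 2 * β * α := by positivity
  have hexp : ENNReal.ofReal (Real.exp (-s / 2)) ^ (2 * β * α)
      = ENNReal.ofReal (Real.exp (-(β * α * s))) := by
    rw [ENNReal.ofReal_rpow_of_pos (Real.exp_pos _), ← Real.exp_mul]
    ring_nf
  calc ∫⁻ x, (∫⁻ θ, R (θ, x) ^ β ∂Pi) ^ α ∂Q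
      = ∫⁻ x, (∫⁻ θ, (R (θ, x) ^ ((1 : ℝ) / 2)) ^ (2 * β) ∂Pi) ^ α ∂Q := by
        simp_rw [← ENNReal.rpow_mul]
        ring_nf
    _ ≤ (∫⁻ x, ∫⁻ θ, R (θ, x) ^ ((1 : ℝ) / 2) ∂Pi ∂Q) ^ (2 * β * α)
          * Pi Set.univ ^ ((1 - 2 * β) * α) :=
        lintegral_rpow_lintegral_rpow_le Q Pi hsqrt (by positivity) (by linarith) hα0.le
          (by nlinarith)
    _ ≤ (ENNReal.ofReal (Real.exp (-s / 2)) * Pi Set.univ) ^ (2 * β * α)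
          * Pi Set.univ ^ ((1 - 2 * β) * α) := by
        gcongr
        exact lintegral_lintegral_le_mul_measure_univ_of_forall_lintegral_le Q Pi hsqrt hhalf
    _ = ENNReal.ofReal (Real.exp (-(β * α * s))) * Pi Set.univ ^ α := by
        rw [ENNReal.mul_rpow_of_nonneg _ _ hpα, hexp, mul_assoc,
          ← ENNReal.rpow_add_of_nonneg _ _ hpα (by nlinarith)]
        ring_nf

/-- Pseudoposterior numerator bound (case `β ≤ 1/2`): if `∫ R(θ,·)^{1/2} dQ ≤ e^{-s/2}` for all
`θ ∈ S`, then `∫ (∫ R^β dPi)^α dQ ≤ e^{-βαs} Pi(S)^α`. -/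
theorem pseudoposterior_numerator_bound_small_beta
    {S X : Type*} [MeasurableSpace S] [MeasurableSpace X]
    (Q : Measure X) [IsProbabilityMeasure Q]
    (Pi : Measure S) [IsFiniteMeasure Pi]
    (R : S × X → ℝ≥0∞) (hR : Measurable R)
    (β : ℝ) (hβ0 : 0 < β) (hβ1 : β ≤ 1 / 2)
    (α : ℝ) (hα0 : 0 < α) (hα1 : α < 1)
    (s : ℝ) (hs : 0 ≤ s)
    (hhalf : ∀ θ : S, ∫⁻ x, (R (θ, x)) ^ ((1 : ℝ) / 2) ∂Q
      ≤ ENNReal.ofReal (Real.exp (-s / 2))) :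
    ∫⁻ x, (∫⁻ θ, (R (θ, x)) ^ β ∂Pi) ^ α ∂Q
      ≤ ENNReal.ofReal (Real.exp (-(β * α * s))) * (Pi Set.univ) ^ α :=
  pseudoposterior_numerator_bound_small_beta_general Q Pi R hR β hβ0 hβ1 α hα0 hα1 s hhalf
end

section
/- Fix 1/2 < β < 1 and 0 < α < 1. Let Q be a probability measure on X, Π a finite measure on S, and R : S × X → [0,∞) measurable with ∫_X R(θ,x)^{1/2} dQ(x) ≤ e^{-s/2} and ∫_X R(θ,x) dQ(x) ≤ 1 for all θ ∈ S and some s ≥ 0. Then ∫_X ( ∫_S R(θ,x)^β dΠ(θ) )^α dQ(x) ≤ e^{-(1-β)αs} Π(S)^α. -/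
/-!
With `t = 2β - 1 ∈ (0, 1)` we have `β = (1 - t) / 2 + t`, so Hölder's inequality with exponents
`1 / (1 - t)` and `1 / t` gives, for every `θ`,
`∫ R^β dQ ≤ (∫ R^{1/2} dQ)^{1-t} (∫ R dQ)^t ≤ e^{-(1-β)s}`.
Jensen's inequality for the concave map `u ↦ u^α` under the probability measure `Q`, followed by
Tonelli, reduces the claim to integrating this bound against `Π`.
-/

open MeasureTheory Real
open scoped ENNReal

section

variable {X : Type*} [MeasurableSpace X] {μ : Measure X} {f : X → ℝ≥0∞}

theorem lintegral_rpow_le_rpow_lintegral [IsProbabilityMeasure μ] (hf : AEMeasurable f μ)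
    {p : ℝ} (hp0 : 0 ≤ p) (hp1 : p ≤ 1) :
    ∫⁻ x, f x ^ p ∂μ ≤ (∫⁻ x, f x ∂μ) ^ p := by
  simpa using ENNReal.lintegral_mul_norm_pow_le (g := fun _ => 1) hf aemeasurable_const
    hp0 (sub_nonneg.2 hp1) (add_sub_cancel p 1)

theorem lintegral_rpow_interpolate_le (hf : AEMeasurable f μ) {a b t : ℝ} (ha : 0 ≤ a)
    (hb : 0 ≤ b) (ht0 : 0 ≤ t) (ht1 : t ≤ 1) :
    ∫⁻ x, f x ^ ((1 - t) * a + t * b) ∂μ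
      ≤ (∫⁻ x, f x ^ a ∂μ) ^ (1 - t) * (∫⁻ x, f x ^ b ∂μ) ^ t := by
  refine le_of_eq_of_le (lintegral_congr fun x => ?_) <| ENNReal.lintegral_mul_norm_pow_le
    (hf.pow_const a) (hf.pow_const b) (sub_nonneg.2 ht1) ht0 (sub_add_cancel 1 t)
  rw [← ENNReal.rpow_mul, ← ENNReal.rpow_mul, ← ENNReal.rpow_add_of_nonneg _ _
    (by nlinarith) (by positivity), mul_comm a, mul_comm b]

theorem lintegral_rpow_le_exp_of_lintegral_sqrt_le (hf : AEMeasurable f μ) {β s : ℝ}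
    (hβ0 : 1 / 2 ≤ β) (hβ1 : β ≤ 1)
    (hhalf : ∫⁻ x, f x ^ ((1 : ℝ) / 2) ∂μ ≤ ENNReal.ofReal (exp (-s / 2)))
    (hone : ∫⁻ x, f x ∂μ ≤ 1) :
    ∫⁻ x, f x ^ β ∂μ ≤ ENNReal.ofReal (exp (-((1 - β) * s))) := by
  calc ∫⁻ x, f x ^ β ∂μ
      = ∫⁻ x, f x ^ ((1 - (2 * β - 1)) * (1 / 2) + (2 * β - 1) * 1) ∂μ := by ring_nf
    _ ≤ (∫⁻ x, f x ^ ((1 : ℝ) / 2) ∂μ) ^ (1 - (2 * β - 1))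
          * (∫⁻ x, f x ^ (1 : ℝ) ∂μ) ^ (2 * β - 1) :=
        lintegral_rpow_interpolate_le hf (by norm_num) zero_le_one (by linarith) (by linarith)
    _ ≤ ENNReal.ofReal (exp (-s / 2)) ^ (1 - (2 * β - 1)) * 1 ^ (2 * β - 1) := by
        simp only [ENNReal.rpow_one]
        gcongr <;> linarith
    _ = ENNReal.ofReal (exp (-((1 - β) * s))) := by
        rw [ENNReal.one_rpow, mul_one, ENNReal.ofReal_rpow_of_pos (exp_pos _), ← exp_mul]
        ring_nf

end

theorem pseudoposterior_numerator_bound_large_beta_general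
    {S X : Type*} [MeasurableSpace S] [MeasurableSpace X]
    (Q : Measure X) [IsProbabilityMeasure Q]
    (Pi : Measure S) [IsFiniteMeasure Pi]
    (R : S × X → ℝ≥0∞) (hR : Measurable R)
    (β : ℝ) (hβ0 : 1 / 2 < β) (hβ1 : β < 1)
    (α : ℝ) (hα0 : 0 < α) (hα1 : α < 1)
    (s : ℝ)
    (hhalf : ∀ θ : S, ∫⁻ x, (R (θ, x)) ^ ((1 : ℝ) / 2) ∂Q
      ≤ ENNReal.ofReal (Real.exp (-s / 2)))
    (hone : ∀ θ : S, ∫⁻ x, R (θ, x) ∂Q ≤ 1) :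
    ∫⁻ x, (∫⁻ θ, (R (θ, x)) ^ β ∂Pi) ^ α ∂Q
      ≤ ENNReal.ofReal (Real.exp (-((1 - β) * α * s))) * (Pi Set.univ) ^ α := by
  set c := ENNReal.ofReal (exp (-((1 - β) * s)))
  have hRβ : Measurable fun p : S × X => R p ^ β := hR.pow_const β
  have hsection (θ : S) : ∫⁻ x, R (θ, x) ^ β ∂Q ≤ c :=
    lintegral_rpow_le_exp_of_lintegral_sqrt_le (hR.comp measurable_prodMk_left).aemeasurable
      hβ0.le hβ1.le (hhalf θ) (hone θ)
  have hmean : ∫⁻ x, ∫⁻ θ, R (θ, x) ^ β ∂Pi ∂Q ≤ c * Pi Set.univ := calc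
    _ = ∫⁻ θ, ∫⁻ x, R (θ, x) ^ β ∂Q ∂Pi :=
        lintegral_lintegral_swap (hRβ.comp measurable_swap).aemeasurable
    _ ≤ ∫⁻ _, c ∂Pi := lintegral_mono hsection
    _ = c * Pi Set.univ := lintegral_const c
  calc ∫⁻ x, (∫⁻ θ, R (θ, x) ^ β ∂Pi) ^ α ∂Q
      ≤ (∫⁻ x, ∫⁻ θ, R (θ, x) ^ β ∂Pi ∂Q) ^ α :=
        lintegral_rpow_le_rpow_lintegral hRβ.lintegral_prod_left'.aemeasurable hα0.le hα1.le
    _ ≤ (c * Pi Set.univ) ^ α := by gcongr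
    _ = ENNReal.ofReal (exp (-((1 - β) * α * s))) * Pi Set.univ ^ α := by
        rw [ENNReal.mul_rpow_of_nonneg _ _ hα0.le, ENNReal.ofReal_rpow_of_pos (exp_pos _),
          ← exp_mul]
        ring_nf

/-- Pseudoposterior numerator bound (case `β > 1/2`): if `∫ R(θ,·)^{1/2} dQ ≤ e^{-s/2}` and
`∫ R(θ,·) dQ ≤ 1` for all `θ ∈ S`, then `∫ (∫ R^β dPi)^α dQ ≤ e^{-(1-β)αs} Pi(S)^α`. -/
theorem pseudoposterior_numerator_bound_large_beta
    {S X : Type*} [MeasurableSpace S] [MeasurableSpace X]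
    (Q : Measure X) [IsProbabilityMeasure Q]
    (Pi : Measure S) [IsFiniteMeasure Pi]
    (R : S × X → ℝ≥0∞) (hR : Measurable R)
    (β : ℝ) (hβ0 : 1 / 2 < β) (hβ1 : β < 1)
    (α : ℝ) (hα0 : 0 < α) (hα1 : α < 1)
    (s : ℝ) (hs : 0 ≤ s)
    (hhalf : ∀ θ : S, ∫⁻ x, (R (θ, x)) ^ ((1 : ℝ) / 2) ∂Q
      ≤ ENNReal.ofReal (Real.exp (-s / 2)))
    (hone : ∀ θ : S, ∫⁻ x, R (θ, x) ∂Q ≤ 1) :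
    ∫⁻ x, (∫⁻ θ, (R (θ, x)) ^ β ∂Pi) ^ α ∂Q
      ≤ ENNReal.ofReal (Real.exp (-((1 - β) * α * s))) * (Pi Set.univ) ^ α :=
  pseudoposterior_numerator_bound_large_beta_general Q Pi R hR β hβ0 hβ1 α hα0 hα1 s hhalf hone
end
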